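/- Double robustness of the DR estimator: if for every (u,i) ∈ D either ê_{u,i} = e_{u,i} or p̂_{u,i} = p_{u,i}, then the DR estimator is unbiased, i.e. E[L_DR] = L_ideal. -/

import Mathlib

open MeasureTheory ProbabilityTheory

/-! Taking expectations pair by pair, the DR term `ê + o (e - ê) / p̂` has mean
`ê + p (e - ê) / p̂`. This equals `e` when `ê = e`, since the correction vanishes, and when
`p̂ = p`, since the factor `p / p̂` is then `1`. -/

section DRTerm

variable {Ω : Type*} [MeasurableSpace Ω] {μ : Measure Ω}

lemma integrable_of_ae_eq_zero_or_one [IsFiniteMeasure μ] {X : Ω → ℝ} (hX : Measurable X)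
    (h01 : ∀ᵐ ω ∂μ, X ω = 0 ∨ X ω = 1) : Integrable X μ :=
  .of_bound hX.aestronglyMeasurable 1 <| h01.mono fun ω hω => by
    rcases hω with h | h <;> simp [h]

lemma integrable_dr_term [IsFiniteMeasure μ] {X : Ω → ℝ} (hX : Integrable X μ) (ehat e q : ℝ) :
    Integrable (fun ω => ehat + X ω * (e - ehat) / q) μ := by
  simp only [mul_div_assoc]
  exact (integrable_const ehat).add (hX.mul_const _)

lemma integral_dr_term [IsProbabilityMeasure μ] {X : Ω → ℝ} (hX : Integrable X μ)
    (ehat e q : ℝ) :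
    ∫ ω, ehat + X ω * (e - ehat) / q ∂μ = ehat + (∫ ω, X ω ∂μ) * (e - ehat) / q := by
  simp only [mul_div_assoc]
  rw [integral_add (integrable_const _) (hX.mul_const _), integral_mul_const, integral_const,
    probReal_univ, one_smul]

end DRTerm

lemma dr_term_eq_of_robust {ehat e p phat : ℝ} (hphat : phat ≠ 0)
    (hrobust : ehat = e ∨ phat = p) : ehat + p * (e - ehat) / phat = e := by
  rcases hrobust with rfl | rfl
  · simp
  · rw [mul_div_right_comm, div_self hphat, one_mul, add_sub_cancel]

theorem dr_double_robust_general {D : Type*} [Fintype D]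
    {Ω : Type*} [MeasureSpace Ω] [IsProbabilityMeasure (ℙ : Measure Ω)]
    (e ehat p phat : D → ℝ) (o : D → Ω → ℝ)
    (hmeas : ∀ i, Measurable (o i))
    (h01 : ∀ i, ∀ᵐ ω, o i ω = 0 ∨ o i ω = 1)
    (hmean : ∀ i, (∫ ω, o i ω) = p i)
    (hphat : ∀ i, 0 < phat i)
    (hrobust : ∀ i, ehat i = e i ∨ phat i = p i) :
    (∫ ω, (1 / (Fintype.card D : ℝ)) *
        ∑ i, (ehat i + o i ω * (e i - ehat i) / phat i))
      = (1 / (Fintype.card D : ℝ)) * ∑ i, e i := by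
  have hint : ∀ i, Integrable (o i) := fun i => integrable_of_ae_eq_zero_or_one (hmeas i) (h01 i)
  rw [integral_const_mul, integral_finsetSum _ fun i _ => integrable_dr_term (hint i) _ _ _]
  congr 1
  refine Finset.sum_congr rfl fun i _ => ?_
  rw [integral_dr_term (hint i), hmean i]
  exact dr_term_eq_of_robust (hphat i).ne' (hrobust i)

/-- Double robustness: if for every pair either the imputed error or the
estimated propensity is accurate, the DR estimator is unbiased. -/
theorem dr_double_robust {D : Type*} [Fintype D] [Nonempty D]
    {Ω : Type*} [MeasureSpace Ω] [IsProbabilityMeasure (ℙ : Measure Ω)]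
    (e ehat p phat : D → ℝ) (o : D → Ω → ℝ)
    (hmeas : ∀ i, Measurable (o i))
    (h01 : ∀ i, ∀ᵐ ω, o i ω = 0 ∨ o i ω = 1)
    (hmean : ∀ i, (∫ ω, o i ω) = p i)
    (hindep : iIndepFun o ℙ)
    (hp0 : ∀ i, 0 ≤ p i) (hp1 : ∀ i, p i ≤ 1)
    (hphat : ∀ i, 0 < phat i)
    (hrobust : ∀ i, ehat i = e i ∨ phat i = p i) :
    (∫ ω, (1 / (Fintype.card D : ℝ)) *
        ∑ i, (ehat i + o i ω * (e i - ehat i) / phat i))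
      = (1 / (Fintype.card D : ℝ)) * ∑ i, e i :=
  dr_double_robust_general e ehat p phat o hmeas h01 hmean hphat hrobust
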